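/- arXiv:1903.01463 — 2 statements merged into one kernel-verified Lean document; each statement's English description precedes it below -/
import Mathlib

section
/- Suppose the constant step size satisfies α ≤ 2/L. Then for every epoch k and every 0 ≤ i ≤ n−1, E[‖x_i^k − x_0^k‖²] ≤ 5iα²G² + 2iα·E[F(x_0^k) − F(x*)]. -/
open Finset MeasureTheory ProbabilityTheory RealInnerProductSpace

noncomputable section

abbrev Vec (d : ℕ) : Type := EuclideanSpace ℝ (Fin d)

/-- The objective `F(x) = (1/n) ∑ i, f(x; i)`. -/
def avgF {d n : ℕ} (f : Fin n → Vec d → ℝ) : Vec d → ℝ :=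
  fun x => (∑ i, f i x) / n

/-- SGDo iterates with constant step size `α`, flattened over epochs:
`σ j` is the permutation used during epoch `j + 1`, and at total step `t`
(the `t % n`-th step of epoch `t / n + 1`) we take a gradient step on the
component selected by the permutation of the current epoch. -/
def sgdoSeq {d n : ℕ} (hn : 0 < n) (f : Fin n → Vec d → ℝ) (α : ℝ)
    (x0 : Vec d) (σ : ℕ → Equiv.Perm (Fin n)) : ℕ → Vec d
  | 0 => x0
  | t + 1 =>
      sgdoSeq hn f α x0 σ t
        - α • gradient (f (σ (t / n) ⟨t % n, Nat.mod_lt t hn⟩)) (sgdoSeq hn f α x0 σ t)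

/-- `x_i^k`, for epoch `k ≥ 1` and within-epoch index `0 ≤ i ≤ n`. -/
def sgdoIter {d n : ℕ} (hn : 0 < n) (f : Fin n → Vec d → ℝ) (α : ℝ)
    (x0 : Vec d) (σ : ℕ → Equiv.Perm (Fin n)) (k i : ℕ) : Vec d :=
  sgdoSeq hn f α x0 σ ((k - 1) * n + i)

/-- Extend a `K`-tuple of permutations to `ℕ` (junk value beyond `K`). -/
def extendPerm {n K : ℕ} (ω : Fin K → Equiv.Perm (Fin n)) : ℕ → Equiv.Perm (Fin n) :=
  fun j => if h : j < K then ω ⟨j, h⟩ else 1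

/-- Expectation of `g` under the uniform distribution on a finite type. -/
def unifExp {Ω : Type*} [Fintype Ω] (g : Ω → ℝ) : ℝ :=
  (∑ ω, g ω) / (Fintype.card Ω)

instance permMeasurableSpace {n : ℕ} : MeasurableSpace (Equiv.Perm (Fin n)) := ⊤

/-- The uniform probability measure on a finite type. -/
def unifMeasure (Ω : Type*) [MeasurableSpace Ω] [Fintype Ω] [Nonempty Ω] : Measure Ω :=
  (PMF.uniformOfFintype Ω).toMeasure

/-- Wasserstein-1 distance between measures on `ℝ^d`, as an infimum over couplings. -/
def W1dist {d : ℕ} (P Q : Measure (Vec d)) : ℝ :=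
  sInf { c | ∃ μ : Measure (Vec d × Vec d), IsProbabilityMeasure μ ∧
    μ.map Prod.fst = P ∧ μ.map Prod.snd = Q ∧ c = ∫ p, ‖p.1 - p.2‖ ∂μ }

/-- Wasserstein-2 distance between measures on `ℝ^d`, as an infimum over couplings. -/
def W2dist {d : ℕ} (P Q : Measure (Vec d)) : ℝ :=
  sInf { c | ∃ μ : Measure (Vec d × Vec d), IsProbabilityMeasure μ ∧
    μ.map Prod.fst = P ∧ μ.map Prod.snd = Q ∧ c = Real.sqrt (∫ p, ‖p.1 - p.2‖ ^ 2 ∂μ) }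

namespace TempReg

variable {d : ℕ}

lemma inner_gradient (g : Vec d → ℝ) (x v : Vec d) :
    ⟪gradient g x, v⟫ = fderiv ℝ g x v := by
  unfold gradient
  exact InnerProductSpace.toDual_symm_apply

lemma norm_gradient_eq (g : Vec d → ℝ) (x : Vec d) :
    ‖gradient g x‖ = ‖fderiv ℝ g x‖ := by
  unfold gradient
  exact LinearIsometryEquiv.norm_map _ _

/-- derivative of the 1-D restriction `t ↦ g (x + t • v)`. -/
lemma hasDerivAt_line (g : Vec d → ℝ) (hg : Differentiable ℝ g) (x v : Vec d) (t : ℝ) :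
    HasDerivAt (fun s : ℝ => g (x + s • v)) ⟪gradient g (x + t • v), v⟫ t := by
  have hc : HasDerivAt (fun s : ℝ => x + s • v) v t := by
    simpa using ((hasDerivAt_id t).smul_const v).const_add x
  rw [inner_gradient]
  exact (hg (x + t • v)).hasFDerivAt.comp_hasDerivAt t hc

/-- first-order condition for convexity. -/
lemma convex_grad_le (g : Vec d → ℝ) (hconv : ConvexOn ℝ Set.univ g)
    (hg : Differentiable ℝ g) (x y : Vec d) :
    g x + ⟪gradient g x, y - x⟫ ≤ g y := by
  set φ : ℝ → ℝ := fun t => g (x + t • (y - x)) with hφ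
  have hconvφ : ConvexOn ℝ Set.univ φ := by
    have := hconv.comp_affineMap (AffineMap.lineMap x y : ℝ →ᵃ[ℝ] Vec d)
    have he : φ = (g ∘ (AffineMap.lineMap x y : ℝ →ᵃ[ℝ] Vec d)) := by
      funext t
      simp only [hφ, Function.comp_apply, AffineMap.lineMap_apply_module]
      congr 1
      rw [smul_sub, sub_smul, one_smul]
      abel
    rw [he]
    simpa using this
  have hd : HasDerivAt φ ⟪gradient g x, y - x⟫ 0 := by
    have h := hasDerivAt_line g hg x (y - x) 0
    simp only [zero_smul, add_zero] at h
    exact h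
  have hslope := hconvφ.le_slope_of_hasDerivAt (Set.mem_univ (0:ℝ)) (Set.mem_univ (1:ℝ))
    one_pos hd
  rw [slope_def_field] at hslope
  have h0 : φ 0 = g x := by simp [hφ]
  have h1 : φ 1 = g y := by simp [hφ]
  rw [h0, h1] at hslope
  simp only [sub_zero, div_one] at hslope
  linarith


/-- descent lemma / quadratic upper bound for an `L`-smooth function. -/
lemma descent_lemma (g : Vec d → ℝ) (hg : Differentiable ℝ g) {L : ℝ} (hL : 0 < L)
    (hsm : ∀ x y : Vec d, ‖gradient g x - gradient g y‖ ≤ L * ‖x - y‖) (x v : Vec d) :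
    g (x + v) ≤ g x + ⟪gradient g x, v⟫ + L / 2 * ‖v‖ ^ 2 := by
  set ψ : ℝ → ℝ := fun t => g (x + t • v) - t * ⟪gradient g x, v⟫ - L / 2 * ‖v‖ ^ 2 * t ^ 2
    with hψ
  have hder : ∀ t : ℝ, HasDerivAt ψ
      (⟪gradient g (x + t • v), v⟫ - ⟪gradient g x, v⟫ - L * ‖v‖ ^ 2 * t) t := by
    intro t
    have h1 := hasDerivAt_line g hg x v t
    have h2 : HasDerivAt (fun s : ℝ => s * ⟪gradient g x, v⟫) ⟪gradient g x, v⟫ t := by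
      simpa using (hasDerivAt_id t).mul_const ⟪gradient g x, v⟫
    have h3 : HasDerivAt (fun s : ℝ => L / 2 * ‖v‖ ^ 2 * s ^ 2) (L * ‖v‖ ^ 2 * t) t := by
      have := ((hasDerivAt_pow 2 t).const_mul (L / 2 * ‖v‖ ^ 2))
      refine this.congr_deriv ?_
      ring
    exact (h1.sub h2).sub h3
  have hmono : AntitoneOn ψ (Set.Icc (0:ℝ) 1) := by
    apply antitoneOn_of_deriv_nonpos (convex_Icc 0 1)
    · exact (Continuous.continuousOn (by
        have := hg.continuous; fun_prop)).congr (fun t _ => rfl)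
    · intro t _
      exact ((hder t).differentiableAt).differentiableWithinAt
    · intro t ht
      rw [interior_Icc] at ht
      rw [(hder t).deriv]
      have hb : ⟪gradient g (x + t • v) - gradient g x, v⟫ ≤ L * ‖v‖ ^ 2 * t := by
        calc ⟪gradient g (x + t • v) - gradient g x, v⟫
            ≤ ‖gradient g (x + t • v) - gradient g x‖ * ‖v‖ := real_inner_le_norm _ _
          _ ≤ (L * ‖x + t • v - x‖) * ‖v‖ := by
              apply mul_le_mul_of_nonneg_right (hsm _ _) (norm_nonneg _)
          _ = L * ‖v‖ ^ 2 * t := by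
              rw [add_sub_cancel_left, norm_smul]
              simp [abs_of_pos ht.1]
              ring
      rw [inner_sub_left] at hb
      linarith
  have h01 := hmono (Set.mem_Icc.2 ⟨le_refl 0, zero_le_one⟩)
    (Set.mem_Icc.2 ⟨zero_le_one, le_refl 1⟩) zero_le_one
  simp only [hψ, zero_smul, add_zero, one_smul, zero_mul, sub_zero, one_pow, mul_one,
    zero_pow, mul_zero] at h01
  linarith [h01]

/-- gradient of `z ↦ g z - ⟪c, z⟫`. -/
lemma gradient_sub_inner (g : Vec d → ℝ) (hg : Differentiable ℝ g) (c : Vec d) (x : Vec d) :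
    gradient (fun z => g z - ⟪c, z⟫) x = gradient g x - c := by
  have hlin : HasFDerivAt (fun z : Vec d => ⟪c, z⟫) (innerSL ℝ c) x :=
    (innerSL ℝ c).hasFDerivAt
  have hsub : HasFDerivAt (fun z => g z - ⟪c, z⟫) (fderiv ℝ g x - innerSL ℝ c) x :=
    (hg x).hasFDerivAt.sub hlin
  unfold gradient
  rw [hsub.fderiv, map_sub]
  congr 1
  have : innerSL ℝ c = InnerProductSpace.toDual ℝ (Vec d) c := by
    ext z; rfl
  rw [this, LinearIsometryEquiv.symm_apply_apply]

/-- convexity of `z ↦ g z - ⟪c, z⟫`. -/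
lemma convexOn_sub_inner (g : Vec d → ℝ) (hconv : ConvexOn ℝ Set.univ g) (c : Vec d) :
    ConvexOn ℝ Set.univ (fun z => g z - ⟪c, z⟫) := by
  refine ⟨convex_univ, fun a _ b _ p q hp hq hpq => ?_⟩
  have := hconv.2 (Set.mem_univ a) (Set.mem_univ b) hp hq hpq
  simp only [smul_eq_mul] at this ⊢
  rw [inner_add_right, real_inner_smul_right, real_inner_smul_right]
  linarith

/-- cocoercivity of the gradient of a convex `L`-smooth function. -/
lemma cocoercive (g : Vec d → ℝ) (hconv : ConvexOn ℝ Set.univ g)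
    (hg : Differentiable ℝ g) {L : ℝ} (hL : 0 < L)
    (hsm : ∀ x y : Vec d, ‖gradient g x - gradient g y‖ ≤ L * ‖x - y‖) (x y : Vec d) :
    1 / L * ‖gradient g x - gradient g y‖ ^ 2 ≤ ⟪gradient g x - gradient g y, x - y⟫ := by
  -- Bregman-type bound
  have breg : ∀ a b : Vec d,
      g a + ⟪gradient g a, b - a⟫ + 1 / (2 * L) * ‖gradient g b - gradient g a‖ ^ 2 ≤ g b := by
    intro a b
    set h : Vec d → ℝ := fun z => g z - ⟪gradient g a, z⟫ with hh
    have hhd : Differentiable ℝ h := by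
      apply hg.sub
      exact (innerSL ℝ (gradient g a)).differentiable
    have hgradh : ∀ z, gradient h z = gradient g z - gradient g a := fun z =>
      gradient_sub_inner g hg (gradient g a) z
    have hhc : ConvexOn ℝ Set.univ h := convexOn_sub_inner g hconv _
    have hhsm : ∀ z w : Vec d, ‖gradient h z - gradient h w‖ ≤ L * ‖z - w‖ := by
      intro z w
      rw [hgradh, hgradh, sub_sub_sub_cancel_right]
      exact hsm z w
    -- h is minimized at a
    have hmin : ∀ z, h a ≤ h z := by
      intro z
      have := convex_grad_le h hhc hhd a z
      rw [hgradh, sub_self] at this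
      simpa using this
    -- descent step on h from b
    have hdesc := descent_lemma h hhd hL hhsm b (-((1/L) • gradient h b))
    have hkey : h a ≤ h b - 1 / (2 * L) * ‖gradient h b‖ ^ 2 := by
      refine le_trans (hmin _) (le_trans hdesc ?_)
      have h1 : ⟪gradient h b, -((1/L) • gradient h b)⟫ = -(1/L) * ‖gradient h b‖ ^ 2 := by
        rw [inner_neg_right, real_inner_smul_right, real_inner_self_eq_norm_sq]
        ring
      have h2 : ‖-((1/L) • gradient h b)‖ ^ 2 = (1/L)^2 * ‖gradient h b‖ ^ 2 := by
        rw [norm_neg, norm_smul, Real.norm_eq_abs, abs_of_pos (by positivity : (0:ℝ) < 1/L),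
          mul_pow]
      rw [h1, h2]
      have hfield : - (1/L) * ‖gradient h b‖ ^ 2 + L/2 * ((1/L)^2 * ‖gradient h b‖ ^ 2)
          = - (1 / (2*L) * ‖gradient h b‖ ^ 2) := by
        field_simp
        ring
      linarith [hfield]
    rw [hh] at hkey
    simp only at hkey
    rw [hgradh] at hkey
    have hinner : ⟪gradient g a, b⟫ - ⟪gradient g a, a⟫ = ⟪gradient g a, b - a⟫ := by
      rw [inner_sub_right]
    linarith [hkey, hinner]
  have h1 := breg x y
  have h2 := breg y x
  have hi1 : ⟪gradient g x, y - x⟫ = - ⟪gradient g x, x - y⟫ := by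
    rw [← inner_neg_right]; congr 1; abel
  rw [inner_sub_left]
  have hsum : 1/(2*L) * ‖gradient g y - gradient g x‖ ^ 2
      + 1/(2*L) * ‖gradient g x - gradient g y‖ ^ 2
      = 1 / L * ‖gradient g x - gradient g y‖ ^ 2 := by
    rw [norm_sub_rev (gradient g y)]
    field_simp
    ring
  linarith [h1, h2, hi1, hsum]

/-- one gradient-descent step is nonexpansive when `0 < α ≤ 2/L`. -/
lemma nonexpansive (g : Vec d → ℝ) (hconv : ConvexOn ℝ Set.univ g)
    (hg : Differentiable ℝ g) {L α : ℝ} (hα : 0 < α) (hα2 : α ≤ 2 / L) (hL : 0 < L)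
    (hsm : ∀ x y : Vec d, ‖gradient g x - gradient g y‖ ≤ L * ‖x - y‖) (x y : Vec d) :
    ‖(x - α • gradient g x) - (y - α • gradient g y)‖ ≤ ‖x - y‖ := by
  have hco := cocoercive g hconv hg hL hsm x y
  have hrw : (x - α • gradient g x) - (y - α • gradient g y)
      = (x - y) - α • (gradient g x - gradient g y) := by
    rw [smul_sub]; abel
  rw [hrw]
  have hsq : ‖(x - y) - α • (gradient g x - gradient g y)‖ ^ 2 ≤ ‖x - y‖ ^ 2 := by
    rw [norm_sub_sq_real, real_inner_smul_right, norm_smul, Real.norm_eq_abs,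
      abs_of_pos hα]
    have hcomm : ⟪x - y, gradient g x - gradient g y⟫
        = ⟪gradient g x - gradient g y, x - y⟫ := real_inner_comm _ _
    rw [hcomm, mul_pow]
    have hkey : α ^ 2 * ‖gradient g x - gradient g y‖ ^ 2
        ≤ 2 * (α * ⟪gradient g x - gradient g y, x - y⟫) := by
      have hstep : α ^ 2 * ‖gradient g x - gradient g y‖ ^ 2
          ≤ 2 * α * (1 / L * ‖gradient g x - gradient g y‖ ^ 2) := by
        have hq : α ^ 2 ≤ 2 * α * (1 / L) := by
          have h' : α * α ≤ α * (2 / L) := mul_le_mul_of_nonneg_left hα2 hα.le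
          have : α * (2 / L) = 2 * α * (1 / L) := by ring
          nlinarith
        nlinarith [sq_nonneg ‖gradient g x - gradient g y‖]
      have hmul := mul_le_mul_of_nonneg_left hco (by positivity : (0:ℝ) ≤ 2 * α)
      nlinarith [hmul]
    linarith
  nlinarith [norm_nonneg ((x - y) - α • (gradient g x - gradient g y)), norm_nonneg (x - y), hsq]

/-- value-Lipschitz bound from gradient norm bound. -/
lemma lipschitz_of_grad_bound (g : Vec d → ℝ) (hg : Differentiable ℝ g) {G : ℝ}
    (hG : ∀ x, ‖gradient g x‖ ≤ G) (x y : Vec d) :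
    |g x - g y| ≤ G * ‖x - y‖ := by
  have := Convex.norm_image_sub_le_of_norm_fderiv_le (f := g) (C := G) (s := Set.univ)
    (fun z _ => hg z) (fun z _ => by rw [← norm_gradient_eq]; exact hG z)
    convex_univ (Set.mem_univ y) (Set.mem_univ x)
  simpa [Real.norm_eq_abs] using this


section Prob

variable {n K : ℕ} {k : ℕ}

/-- trajectories agree if the selected components agree at every step. -/
lemma seq_congr {d : ℕ} (hn : 0 < n) (f : Fin n → Vec d → ℝ) (α : ℝ) (x0 : Vec d)
    (σ₁ σ₂ : ℕ → Equiv.Perm (Fin n)) (T : ℕ)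
    (h : ∀ t, t < T → σ₁ (t / n) ⟨t % n, Nat.mod_lt t hn⟩ = σ₂ (t / n) ⟨t % n, Nat.mod_lt t hn⟩) :
    sgdoSeq hn f α x0 σ₁ T = sgdoSeq hn f α x0 σ₂ T := by
  induction T with
  | zero => rfl
  | succ T ih =>
    rw [sgdoSeq, sgdoSeq]
    rw [ih (fun t ht => h t (Nat.lt_succ_of_lt ht)), h T (Nat.lt_succ_self T)]

/-- the step equation within epoch `k`. -/
lemma seq_epoch_step {d : ℕ} (hn : 0 < n) (f : Fin n → Vec d → ℝ) (α : ℝ) (x0 : Vec d)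
    (σ : ℕ → Equiv.Perm (Fin n)) (j : ℕ) (hj : j < n) :
    sgdoSeq hn f α x0 σ ((k - 1) * n + j + 1)
      = sgdoSeq hn f α x0 σ ((k - 1) * n + j)
        - α • gradient (f (σ (k - 1) ⟨j, hj⟩)) (sgdoSeq hn f α x0 σ ((k - 1) * n + j)) := by
  have hdiv : ((k - 1) * n + j) / n = k - 1 := by
    rw [Nat.mul_comm, Nat.mul_add_div hn, Nat.div_eq_of_lt hj, Nat.add_zero]
  have hmod : ((k - 1) * n + j) % n = j := by
    rw [Nat.mul_comm, Nat.mul_add_mod, Nat.mod_eq_of_lt hj]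
  have hfin : (⟨((k - 1) * n + j) % n, Nat.mod_lt _ hn⟩ : Fin n) = ⟨j, hj⟩ :=
    Fin.ext (by simpa using hmod)
  rw [sgdoSeq, hdiv, hfin]

/-- the swap-update involution on the sample space. -/
def swapUp (hk : k - 1 < K) (a b : Fin n) (ω : Fin K → Equiv.Perm (Fin n)) :
    Fin K → Equiv.Perm (Fin n) :=
  Function.update ω ⟨k - 1, hk⟩ ((Equiv.swap a b).trans (ω ⟨k - 1, hk⟩))

lemma swapUp_invol (hk : k - 1 < K) (a b : Fin n) :
    Function.Involutive (swapUp hk a b) := by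
  intro ω
  unfold swapUp
  rw [Function.update_self, Function.update_idem]
  have : (Equiv.swap a b).trans ((Equiv.swap a b).trans (ω ⟨k - 1, hk⟩)) = ω ⟨k - 1, hk⟩ := by
    ext x
    simp [Equiv.swap_apply_self]
  rw [this, Function.update_eq_self]

lemma swapUp_at (hk : k - 1 < K) (a b : Fin n) (ω : Fin K → Equiv.Perm (Fin n)) :
    extendPerm (swapUp hk a b ω) (k - 1) = (Equiv.swap a b).trans (ω ⟨k - 1, hk⟩) := by
  unfold extendPerm swapUp
  rw [dif_pos hk, Function.update_self]

lemma swapUp_ne (hk : k - 1 < K) (a b : Fin n) (ω : Fin K → Equiv.Perm (Fin n))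
    (t : ℕ) (ht : t ≠ k - 1) :
    extendPerm (swapUp hk a b ω) t = extendPerm ω t := by
  unfold extendPerm swapUp
  by_cases h : t < K
  · rw [dif_pos h, dif_pos h, Function.update_of_ne (by
      intro hcon
      exact ht (by simpa using congrArg Fin.val hcon))]
  · rw [dif_neg h, dif_neg h]

lemma extendPerm_at (hk : k - 1 < K) (ω : Fin K → Equiv.Perm (Fin n)) :
    extendPerm ω (k - 1) = ω ⟨k - 1, hk⟩ := by
  unfold extendPerm
  rw [dif_pos hk]


variable {d : ℕ}

def Xtraj (hn : 0 < n) (f : Fin n → Vec d → ℝ) (α : ℝ) (x0 : Vec d) (k j : ℕ)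
    (ω : Fin K → Equiv.Perm (Fin n)) : Vec d :=
  sgdoSeq hn f α x0 (extendPerm ω) ((k - 1) * n + j)

lemma Xtraj_succ (hn : 0 < n) (f : Fin n → Vec d → ℝ) (α : ℝ) (x0 : Vec d)
    (hk : k - 1 < K) (j : ℕ) (hj : j < n) (ω : Fin K → Equiv.Perm (Fin n)) :
    Xtraj hn f α x0 k (j + 1) ω
      = Xtraj hn f α x0 k j ω
        - α • gradient (f (ω ⟨k - 1, hk⟩ ⟨j, hj⟩)) (Xtraj hn f α x0 k j ω) := by
  unfold Xtraj
  have h1 : (k - 1) * n + (j + 1) = (k - 1) * n + j + 1 := rfl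
  rw [h1, seq_epoch_step hn f α x0 _ j hj, extendPerm_at hk]

lemma Xtraj_swapUp_eq (hn : 0 < n) (f : Fin n → Vec d → ℝ) (α : ℝ) (x0 : Vec d)
    (hk : k - 1 < K) (a b : Fin n) (j : ℕ) (ha : j ≤ a.val) (hb : j ≤ b.val)
    (ω : Fin K → Equiv.Perm (Fin n)) :
    Xtraj hn f α x0 k j (swapUp hk a b ω) = Xtraj hn f α x0 k j ω := by
  apply seq_congr
  intro t ht
  by_cases hc : t / n = k - 1
  · have hdm := Nat.div_add_mod t n
    have hmlt : t % n < n := Nat.mod_lt t hn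
    have hpos : t % n < j := by
      have ht' : n * (t / n) + t % n < (k - 1) * n + j := by rw [hdm]; exact ht
      rw [hc, Nat.mul_comm n (k - 1)] at ht'
      omega
    rw [hc, swapUp_at, extendPerm_at hk, Equiv.trans_apply]
    congr 1
    apply Equiv.swap_apply_of_ne_of_ne
    · apply Fin.ne_of_val_ne
      show t % n ≠ a.val
      omega
    · apply Fin.ne_of_val_ne
      show t % n ≠ b.val
      omega
  · rw [swapUp_ne hk a b ω _ hc]

lemma Xtraj_swapUp_close (hn : 0 < n) (f : Fin n → Vec d → ℝ) {G L α : ℝ} (x0 : Vec d)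
    (hk : k - 1 < K)
    (hα : 0 < α) (hα2 : α ≤ 2 / L) (hL : 0 < L)
    (hdiff : ∀ p, Differentiable ℝ (f p))
    (hconv : ∀ p, ConvexOn ℝ Set.univ (f p))
    (hGlip : ∀ p x, ‖gradient (f p) x‖ ≤ G)
    (hLsmooth : ∀ p x y, ‖gradient (f p) x - gradient (f p) y‖ ≤ L * ‖x - y‖)
    (j : ℕ) (hjn : j < n) (m : Fin n) (ω : Fin K → Equiv.Perm (Fin n)) :
    ‖Xtraj hn f α x0 k j (swapUp hk ⟨j, hjn⟩ m ω) - Xtraj hn f α x0 k j ω‖ ≤ 2 * α * G := by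
  have hG0 : 0 ≤ G := le_trans (norm_nonneg _) (hGlip ⟨0, hn⟩ 0)
  by_cases hmj : j ≤ m.val
  · rw [Xtraj_swapUp_eq hn f α x0 hk _ _ j (le_refl j) hmj]
    simp only [sub_self, norm_zero]
    positivity
  · push_neg at hmj
    -- one differing step at position m.val, then nonexpansive steps
    have key : ∀ t, m.val + 1 ≤ t → t ≤ j →
        ‖Xtraj hn f α x0 k t (swapUp hk ⟨j, hjn⟩ m ω) - Xtraj hn f α x0 k t ω‖ ≤ 2 * α * G := by
      intro t ht1
      induction t, ht1 using Nat.le_induction with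
      | base =>
        intro _
        have hmn : m.val < n := m.isLt
        have hXm : Xtraj hn f α x0 k m.val (swapUp hk ⟨j, hjn⟩ m ω) = Xtraj hn f α x0 k m.val ω :=
          Xtraj_swapUp_eq hn f α x0 hk _ _ m.val (le_of_lt hmj) (le_refl m.val) ω
        rw [Xtraj_succ hn f α x0 hk m.val hmn, Xtraj_succ hn f α x0 hk m.val hmn, hXm]
        have hcomp : (swapUp hk ⟨j, hjn⟩ m ω) ⟨k - 1, hk⟩ ⟨m.val, hmn⟩
            = ω ⟨k - 1, hk⟩ ⟨j, hjn⟩ := by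
          unfold swapUp
          rw [Function.update_self, Equiv.trans_apply]
          congr 1
          rw [Fin.eta]
          exact Equiv.swap_apply_right _ _
        rw [hcomp]
        set w := Xtraj hn f α x0 k m.val ω
        set g1 := gradient (f (ω ⟨k - 1, hk⟩ ⟨j, hjn⟩)) w
        set g2 := gradient (f (ω ⟨k - 1, hk⟩ ⟨m.val, hmn⟩)) w
        have hrw : (w - α • g1) - (w - α • g2) = α • g2 - α • g1 := by abel
        rw [hrw]
        calc ‖α • g2 - α • g1‖ ≤ ‖α • g2‖ + ‖α • g1‖ := norm_sub_le _ _
          _ = α * ‖g2‖ + α * ‖g1‖ := by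
              rw [norm_smul, norm_smul, Real.norm_eq_abs, abs_of_pos hα]
          _ ≤ α * G + α * G := by
              have h1 := hGlip (ω ⟨k - 1, hk⟩ ⟨j, hjn⟩) w
              have h2 := hGlip (ω ⟨k - 1, hk⟩ ⟨m.val, hmn⟩) w
              have := hα.le
              gcongr
          _ = 2 * α * G := by ring
      | succ t ht ih =>
        intro ht2
        have hbound := ih (le_trans (Nat.le_succ t) ht2)
        have htn : t < n := lt_trans (lt_of_lt_of_le (Nat.lt_succ_self t) ht2) hjn
        rw [Xtraj_succ hn f α x0 hk t htn, Xtraj_succ hn f α x0 hk t htn]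
        have hcomp : (swapUp hk ⟨j, hjn⟩ m ω) ⟨k - 1, hk⟩ ⟨t, htn⟩
            = ω ⟨k - 1, hk⟩ ⟨t, htn⟩ := by
          unfold swapUp
          rw [Function.update_self, Equiv.trans_apply]
          congr 1
          apply Equiv.swap_apply_of_ne_of_ne
          · apply Fin.ne_of_val_ne
            show t ≠ j
            omega
          · apply Fin.ne_of_val_ne
            show t ≠ m.val
            omega
        rw [hcomp]
        set p := ω ⟨k - 1, hk⟩ ⟨t, htn⟩
        exact le_trans (nonexpansive (f p) (hconv p) (hdiff p) hα hα2 hL (hLsmooth p) _ _) hbound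
    exact key j hmj (le_refl j)


lemma sum_swapUp (hk : k - 1 < K) (a b : Fin n) (h : (Fin K → Equiv.Perm (Fin n)) → ℝ) :
    ∑ ω : Fin K → Equiv.Perm (Fin n), h (swapUp hk a b ω) = ∑ ω : Fin K → Equiv.Perm (Fin n), h ω :=
  Function.Bijective.sum_comp (swapUp_invol hk a b).bijective h

/-- the component at any not-yet-used position has the same distribution as position `j`,
conditionally on the past; sum version at the start of the epoch. -/
lemma marg_zero (hn : 0 < n) (f : Fin n → Vec d → ℝ) (α : ℝ) (x0 : Vec d)
    (hk : k - 1 < K) (j : ℕ) (hj : j < n) (m : Fin n) :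
    ∑ ω : Fin K → Equiv.Perm (Fin n), f (ω ⟨k - 1, hk⟩ m) (Xtraj hn f α x0 k 0 ω)
      = ∑ ω : Fin K → Equiv.Perm (Fin n), f (ω ⟨k - 1, hk⟩ ⟨j, hj⟩) (Xtraj hn f α x0 k 0 ω) := by
  rw [← sum_swapUp hk ⟨j, hj⟩ m (fun ω => f (ω ⟨k - 1, hk⟩ ⟨j, hj⟩) (Xtraj hn f α x0 k 0 ω))]
  apply Finset.sum_congr rfl
  intro ω _
  have h1 : (swapUp hk ⟨j, hj⟩ m ω) ⟨k - 1, hk⟩ ⟨j, hj⟩ = ω ⟨k - 1, hk⟩ m := by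
    unfold swapUp
    rw [Function.update_self, Equiv.trans_apply, Equiv.swap_apply_left]
  have h2 : Xtraj hn f α x0 k 0 (swapUp hk ⟨j, hj⟩ m ω) = Xtraj hn f α x0 k 0 ω :=
    Xtraj_swapUp_eq hn f α x0 hk _ _ 0 (Nat.zero_le _) (Nat.zero_le _) ω
  rw [h1, h2]

/-- sum version of the key estimate: the value of the component selected at position `j`,
evaluated at `x_j`, compared with any other position `m`. -/
lemma marg_j (hn : 0 < n) (f : Fin n → Vec d → ℝ) {G L α : ℝ} (x0 : Vec d)
    (hk : k - 1 < K)
    (hα : 0 < α) (hα2 : α ≤ 2 / L) (hL : 0 < L)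
    (hdiff : ∀ p, Differentiable ℝ (f p))
    (hconv : ∀ p, ConvexOn ℝ Set.univ (f p))
    (hGlip : ∀ p x, ‖gradient (f p) x‖ ≤ G)
    (hLsmooth : ∀ p x y, ‖gradient (f p) x - gradient (f p) y‖ ≤ L * ‖x - y‖)
    (j : ℕ) (hj : j < n) (m : Fin n) :
    ∑ ω : Fin K → Equiv.Perm (Fin n), f (ω ⟨k - 1, hk⟩ m) (Xtraj hn f α x0 k j ω)
      ≤ (∑ ω : Fin K → Equiv.Perm (Fin n), f (ω ⟨k - 1, hk⟩ ⟨j, hj⟩) (Xtraj hn f α x0 k j ω))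
        + (Fintype.card (Fin K → Equiv.Perm (Fin n))) * (2 * α * G ^ 2) := by
  have hstep : ∑ ω : Fin K → Equiv.Perm (Fin n), f (ω ⟨k - 1, hk⟩ m) (Xtraj hn f α x0 k j ω)
      = ∑ ω : Fin K → Equiv.Perm (Fin n), f (ω ⟨k - 1, hk⟩ ⟨j, hj⟩) (Xtraj hn f α x0 k j (swapUp hk ⟨j, hj⟩ m ω)) := by
    rw [← sum_swapUp hk ⟨j, hj⟩ m (fun ω => f (ω ⟨k - 1, hk⟩ m) (Xtraj hn f α x0 k j ω))]
    apply Finset.sum_congr rfl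
    intro ω _
    have h1 : (swapUp hk ⟨j, hj⟩ m ω) ⟨k - 1, hk⟩ m = ω ⟨k - 1, hk⟩ ⟨j, hj⟩ := by
      unfold swapUp
      rw [Function.update_self, Equiv.trans_apply, Equiv.swap_apply_right]
    rw [h1]
  rw [hstep]
  have hcard : ((Fintype.card (Fin K → Equiv.Perm (Fin n))) : ℝ) * (2 * α * G ^ 2)
      = ∑ _ω : Fin K → Equiv.Perm (Fin n), (2 * α * G ^ 2) := by
    rw [Finset.sum_const, Finset.card_univ, nsmul_eq_mul]
  rw [hcard, ← Finset.sum_add_distrib]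
  apply Finset.sum_le_sum
  intro ω _
  set c := ω ⟨k - 1, hk⟩ ⟨j, hj⟩
  have hlip := lipschitz_of_grad_bound (f c) (hdiff c) (hGlip c)
    (Xtraj hn f α x0 k j (swapUp hk ⟨j, hj⟩ m ω)) (Xtraj hn f α x0 k j ω)
  have hclose := Xtraj_swapUp_close hn f x0 hk hα hα2 hL hdiff hconv hGlip hLsmooth j hj m ω
  have habs := abs_le.1 hlip
  have hG0 : 0 ≤ G := le_trans (norm_nonneg _) (hGlip ⟨0, hn⟩ 0)
  have : G * ‖Xtraj hn f α x0 k j (swapUp hk ⟨j, hj⟩ m ω) - Xtraj hn f α x0 k j ω‖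
      ≤ G * (2 * α * G) := by
    exact mul_le_mul_of_nonneg_left hclose hG0
  nlinarith [habs.2]



lemma step_bound (hn : 0 < n) (f : Fin n → Vec d → ℝ) {G L α : ℝ} (x0 xstar : Vec d)
    (hk : k - 1 < K)
    (hα : 0 < α) (hα2 : α ≤ 2 / L) (hL : 0 < L)
    (hdiff : ∀ p, Differentiable ℝ (f p))
    (hconv : ∀ p, ConvexOn ℝ Set.univ (f p))
    (hGlip : ∀ p x, ‖gradient (f p) x‖ ≤ G)
    (hLsmooth : ∀ p x y, ‖gradient (f p) x - gradient (f p) y‖ ≤ L * ‖x - y‖)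
    (hmin : ∀ y, avgF f xstar ≤ avgF f y)
    (j : ℕ) (hj : j < n) :
    ∑ ω : Fin K → Equiv.Perm (Fin n), ‖Xtraj hn f α x0 k (j+1) ω - Xtraj hn f α x0 k 0 ω‖ ^ 2
      ≤ (∑ ω : Fin K → Equiv.Perm (Fin n),
            ‖Xtraj hn f α x0 k j ω - Xtraj hn f α x0 k 0 ω‖ ^ 2)
        + (Fintype.card (Fin K → Equiv.Perm (Fin n))) * (5 * α ^ 2 * G ^ 2)
        + 2 * α * ∑ ω : Fin K → Equiv.Perm (Fin n),
            (avgF f (Xtraj hn f α x0 k 0 ω) - avgF f xstar) := by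
  have hn' : ((n : ℝ)) ≠ 0 := Nat.cast_ne_zero.2 hn.ne'
  set N := (Fintype.card (Fin K → Equiv.Perm (Fin n)) : ℝ) with hN
  -- pointwise expansion + convexity
  have hpt : ∀ ω : Fin K → Equiv.Perm (Fin n),
      ‖Xtraj hn f α x0 k (j+1) ω - Xtraj hn f α x0 k 0 ω‖ ^ 2
        ≤ ‖Xtraj hn f α x0 k j ω - Xtraj hn f α x0 k 0 ω‖ ^ 2
          + 2 * α * (f (ω ⟨k - 1, hk⟩ ⟨j, hj⟩) (Xtraj hn f α x0 k 0 ω)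
              - f (ω ⟨k - 1, hk⟩ ⟨j, hj⟩) (Xtraj hn f α x0 k j ω))
          + α ^ 2 * G ^ 2 := by
    intro ω
    set c := ω ⟨k - 1, hk⟩ ⟨j, hj⟩
    set Xj := Xtraj hn f α x0 k j ω
    set X0' := Xtraj hn f α x0 k 0 ω
    set g := gradient (f c) Xj
    have hXs : Xtraj hn f α x0 k (j+1) ω = Xj - α • g := Xtraj_succ hn f α x0 hk j hj ω
    have hrw : Xj - α • g - X0' = (Xj - X0') - α • g := by abel
    rw [hXs, hrw, norm_sub_sq_real, real_inner_smul_right]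
    have hconvi := convex_grad_le (f c) (hconv c) (hdiff c) Xj X0'
    have hinner : ⟪g, X0' - Xj⟫ = - ⟪Xj - X0', g⟫ := by
      rw [real_inner_comm]
      rw [← inner_neg_left]
      congr 1
      abel
    rw [hinner] at hconvi
    have hgn : ‖α • g‖ ^ 2 ≤ α ^ 2 * G ^ 2 := by
      rw [norm_smul, Real.norm_eq_abs, abs_of_pos hα, mul_pow]
      have := hGlip c Xj
      have hG0 : 0 ≤ G := le_trans (norm_nonneg _) (hGlip c Xj)
      have : ‖g‖ ^ 2 ≤ G ^ 2 := by nlinarith [norm_nonneg g]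
      nlinarith [sq_nonneg α]
    nlinarith [hconvi, hgn]
  have hsum1 := Finset.sum_le_sum
    (s := (Finset.univ : Finset (Fin K → Equiv.Perm (Fin n)))) (fun ω _ => hpt ω)
  -- identify the two value sums
  have hC : ∑ ω : Fin K → Equiv.Perm (Fin n), f (ω ⟨k - 1, hk⟩ ⟨j, hj⟩) (Xtraj hn f α x0 k 0 ω)
      = ∑ ω : Fin K → Equiv.Perm (Fin n), avgF f (Xtraj hn f α x0 k 0 ω) := by
    have h1 : (n : ℝ) * ∑ ω : Fin K → Equiv.Perm (Fin n),
        f (ω ⟨k - 1, hk⟩ ⟨j, hj⟩) (Xtraj hn f α x0 k 0 ω)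
        = ∑ ω : Fin K → Equiv.Perm (Fin n), ∑ p, f p (Xtraj hn f α x0 k 0 ω) := by
      calc (n : ℝ) * ∑ ω : Fin K → Equiv.Perm (Fin n),
          f (ω ⟨k - 1, hk⟩ ⟨j, hj⟩) (Xtraj hn f α x0 k 0 ω)
          = ∑ _m : Fin n, ∑ ω : Fin K → Equiv.Perm (Fin n),
              f (ω ⟨k - 1, hk⟩ ⟨j, hj⟩) (Xtraj hn f α x0 k 0 ω) := by
            rw [Finset.sum_const, Finset.card_univ, Fintype.card_fin, nsmul_eq_mul]
        _ = ∑ m : Fin n, ∑ ω : Fin K → Equiv.Perm (Fin n),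
              f (ω ⟨k - 1, hk⟩ m) (Xtraj hn f α x0 k 0 ω) :=
            Finset.sum_congr rfl (fun m _ => (marg_zero hn f α x0 hk j hj m).symm)
        _ = ∑ ω : Fin K → Equiv.Perm (Fin n), ∑ m : Fin n,
              f (ω ⟨k - 1, hk⟩ m) (Xtraj hn f α x0 k 0 ω) := Finset.sum_comm
        _ = ∑ ω : Fin K → Equiv.Perm (Fin n), ∑ p, f p (Xtraj hn f α x0 k 0 ω) :=
            Finset.sum_congr rfl (fun ω _ =>
              Equiv.sum_comp (ω ⟨k - 1, hk⟩) (fun p => f p (Xtraj hn f α x0 k 0 ω)))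
    have h2 : ∑ ω : Fin K → Equiv.Perm (Fin n), avgF f (Xtraj hn f α x0 k 0 ω)
        = (∑ ω : Fin K → Equiv.Perm (Fin n), ∑ p, f p (Xtraj hn f α x0 k 0 ω)) / n := by
      unfold avgF
      rw [← Finset.sum_div]
    rw [h2, ← h1]
    field_simp
  have hD : (∑ ω : Fin K → Equiv.Perm (Fin n), avgF f (Xtraj hn f α x0 k j ω))
      ≤ (∑ ω : Fin K → Equiv.Perm (Fin n), f (ω ⟨k - 1, hk⟩ ⟨j, hj⟩) (Xtraj hn f α x0 k j ω)) + N * (2 * α * G ^ 2) := by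
    have h2 : ∑ ω : Fin K → Equiv.Perm (Fin n), avgF f (Xtraj hn f α x0 k j ω)
        = (∑ ω : Fin K → Equiv.Perm (Fin n), ∑ p, f p (Xtraj hn f α x0 k j ω)) / n := by
      unfold avgF
      rw [← Finset.sum_div]
    have h1 : (n : ℝ) * ∑ ω : Fin K → Equiv.Perm (Fin n), avgF f (Xtraj hn f α x0 k j ω)
        = ∑ m : Fin n, ∑ ω : Fin K → Equiv.Perm (Fin n),
            f (ω ⟨k - 1, hk⟩ m) (Xtraj hn f α x0 k j ω) := by
      rw [h2, mul_div_cancel₀ _ hn']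
      calc ∑ ω : Fin K → Equiv.Perm (Fin n), ∑ p, f p (Xtraj hn f α x0 k j ω)
          = ∑ ω : Fin K → Equiv.Perm (Fin n), ∑ m : Fin n,
              f (ω ⟨k - 1, hk⟩ m) (Xtraj hn f α x0 k j ω) :=
            Finset.sum_congr rfl (fun ω _ =>
              (Equiv.sum_comp (ω ⟨k - 1, hk⟩) (fun p => f p (Xtraj hn f α x0 k j ω))).symm)
        _ = ∑ m : Fin n, ∑ ω : Fin K → Equiv.Perm (Fin n),
              f (ω ⟨k - 1, hk⟩ m) (Xtraj hn f α x0 k j ω) := Finset.sum_comm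
    have h3 : ∑ m : Fin n, ∑ ω : Fin K → Equiv.Perm (Fin n),
          f (ω ⟨k - 1, hk⟩ m) (Xtraj hn f α x0 k j ω)
        ≤ ∑ _m : Fin n, ((∑ ω : Fin K → Equiv.Perm (Fin n),
            f (ω ⟨k - 1, hk⟩ ⟨j, hj⟩) (Xtraj hn f α x0 k j ω)) + N * (2 * α * G ^ 2)) :=
      Finset.sum_le_sum (fun m _ =>
        marg_j hn f x0 hk hα hα2 hL hdiff hconv hGlip hLsmooth j hj m)
    rw [Finset.sum_const, Finset.card_univ, Fintype.card_fin, nsmul_eq_mul] at h3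
    have hnpos : (0:ℝ) < n := Nat.cast_pos.2 hn
    have h13 : (n:ℝ) * (∑ ω : Fin K → Equiv.Perm (Fin n), avgF f (Xtraj hn f α x0 k j ω))
        ≤ (n:ℝ) * ((∑ ω : Fin K → Equiv.Perm (Fin n),
            f (ω ⟨k - 1, hk⟩ ⟨j, hj⟩) (Xtraj hn f α x0 k j ω)) + N * (2 * α * G ^ 2)) := by
      rw [h1]; exact h3
    exact (mul_le_mul_iff_right₀ hnpos).1 h13
  -- lower bound via the minimizer
  have hstar : (N : ℝ) * avgF f xstar
      ≤ ∑ ω : Fin K → Equiv.Perm (Fin n), avgF f (Xtraj hn f α x0 k j ω) := by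
    have := Finset.sum_le_sum
      (fun (ω : Fin K → Equiv.Perm (Fin n)) (_ : ω ∈ Finset.univ) =>
        hmin (Xtraj hn f α x0 k j ω))
    rw [Finset.sum_const, Finset.card_univ, nsmul_eq_mul] at this
    exact this
  have hE : (N : ℝ) * avgF f xstar - N * (2 * α * G ^ 2)
      ≤ ∑ ω : Fin K → Equiv.Perm (Fin n),
          f (ω ⟨k - 1, hk⟩ ⟨j, hj⟩) (Xtraj hn f α x0 k j ω) := by
    linarith [hD, hstar]
  -- expand the summed pointwise bound
  have hexp : ∑ ω : Fin K → Equiv.Perm (Fin n),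
      (‖Xtraj hn f α x0 k j ω - Xtraj hn f α x0 k 0 ω‖ ^ 2
        + 2 * α * (f (ω ⟨k - 1, hk⟩ ⟨j, hj⟩) (Xtraj hn f α x0 k 0 ω)
            - f (ω ⟨k - 1, hk⟩ ⟨j, hj⟩) (Xtraj hn f α x0 k j ω))
        + α ^ 2 * G ^ 2)
      = (∑ ω : Fin K → Equiv.Perm (Fin n), ‖Xtraj hn f α x0 k j ω - Xtraj hn f α x0 k 0 ω‖ ^ 2)
        + 2 * α * ((∑ ω : Fin K → Equiv.Perm (Fin n), f (ω ⟨k - 1, hk⟩ ⟨j, hj⟩) (Xtraj hn f α x0 k 0 ω))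
            - ∑ ω : Fin K → Equiv.Perm (Fin n), f (ω ⟨k - 1, hk⟩ ⟨j, hj⟩) (Xtraj hn f α x0 k j ω))
        + N * (α ^ 2 * G ^ 2) := by
    rw [Finset.sum_add_distrib, Finset.sum_add_distrib, Finset.sum_const, Finset.card_univ,
      nsmul_eq_mul, ← Finset.mul_sum, Finset.sum_sub_distrib]
  have hgap : ∑ ω : Fin K → Equiv.Perm (Fin n),
      (avgF f (Xtraj hn f α x0 k 0 ω) - avgF f xstar)
      = (∑ ω : Fin K → Equiv.Perm (Fin n), avgF f (Xtraj hn f α x0 k 0 ω)) - N * avgF f xstar := by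
    rw [Finset.sum_sub_distrib, Finset.sum_const, Finset.card_univ, nsmul_eq_mul]
  have hfin := le_trans hsum1 (le_of_eq hexp)
  rw [hC] at hfin
  have h2α : (0:ℝ) ≤ 2 * α := by positivity
  have hmul := mul_le_mul_of_nonneg_left hE h2α
  rw [hgap]
  nlinarith [hfin, hmul]


lemma main_sum (hn : 0 < n) (f : Fin n → Vec d → ℝ) {G L α : ℝ} (x0 xstar : Vec d)
    (hk : k - 1 < K)
    (hα : 0 < α) (hα2 : α ≤ 2 / L) (hL : 0 < L)
    (hdiff : ∀ p, Differentiable ℝ (f p))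
    (hconv : ∀ p, ConvexOn ℝ Set.univ (f p))
    (hGlip : ∀ p x, ‖gradient (f p) x‖ ≤ G)
    (hLsmooth : ∀ p x y, ‖gradient (f p) x - gradient (f p) y‖ ≤ L * ‖x - y‖)
    (hmin : ∀ y, avgF f xstar ≤ avgF f y) :
    ∀ i, i ≤ n →
      ∑ ω : Fin K → Equiv.Perm (Fin n),
          ‖Xtraj hn f α x0 k i ω - Xtraj hn f α x0 k 0 ω‖ ^ 2
        ≤ (i : ℝ) * ((Fintype.card (Fin K → Equiv.Perm (Fin n))) * (5 * α ^ 2 * G ^ 2))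
          + 2 * (i : ℝ) * α * ∑ ω : Fin K → Equiv.Perm (Fin n),
              (avgF f (Xtraj hn f α x0 k 0 ω) - avgF f xstar) := by
  intro i
  induction i with
  | zero =>
    intro _
    simp
  | succ i ih =>
    intro hsn
    have hin : i < n := lt_of_lt_of_le (Nat.lt_succ_self i) hsn
    have h1 := step_bound hn f x0 xstar hk hα hα2 hL hdiff hconv hGlip hLsmooth hmin i hin
    have h2 := ih (le_of_lt hin)
    push_cast
    push_cast at h2
    linarith [h1, h2]

end Prob
end TempReg

/-- **Lemma 6 (temporal regularity, first part).** If `α ≤ 2/L`, then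
`E[‖x_i^k − x_0^k‖²] ≤ 5iα²G² + 2iα·E[F(x_0^k) − F(x*)]`. -/
theorem temporal_regularity_drift
    (d n K : ℕ) (hn : 0 < n) (hK : 0 < K)
    (f : Fin n → Vec d → ℝ) (G L α : ℝ) (x0 xstar : Vec d)
    (hα : 0 < α) (hα2 : α ≤ 2 / L)
    (hdiff : ∀ i, Differentiable ℝ (f i))
    (hconv : ∀ i, ConvexOn ℝ Set.univ (f i))
    (hGlip : ∀ i x, ‖gradient (f i) x‖ ≤ G)
    (hLsmooth : ∀ i x y, ‖gradient (f i) x - gradient (f i) y‖ ≤ L * ‖x - y‖)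
    (hmin : ∀ y, avgF f xstar ≤ avgF f y)
    (k : ℕ) (hk1 : 1 ≤ k) (hkK : k ≤ K) (i : Fin n) :
    unifExp (fun ω : Fin K → Equiv.Perm (Fin n) => ‖sgdoIter hn f α x0 (extendPerm ω) k (i : ℕ) - sgdoIter hn f α x0 (extendPerm ω) k 0‖ ^ 2)
      ≤ 5 * (i : ℕ) * α ^ 2 * G ^ 2
        + 2 * (i : ℕ) * α *
          unifExp (fun ω : Fin K → Equiv.Perm (Fin n) => avgF f (sgdoIter hn f α x0 (extendPerm ω) k 0) - avgF f xstar) := by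
  
  have hL : 0 < L := by
    by_contra h
    push_neg at h
    have : 2 / L ≤ 0 := div_nonpos_of_nonneg_of_nonpos (by norm_num) h
    linarith
  have hk : k - 1 < K := lt_of_lt_of_le (Nat.sub_lt hk1 one_pos) hkK
  have hmain := TempReg.main_sum (k := k) hn f x0 xstar hk hα hα2 hL hdiff hconv hGlip
    hLsmooth hmin (i : ℕ) (le_of_lt i.isLt)
  have hNpos : 0 < ((Fintype.card (Fin K → Equiv.Perm (Fin n))) : ℝ) := by
    exact_mod_cast Fintype.card_pos
  set N := ((Fintype.card (Fin K → Equiv.Perm (Fin n))) : ℝ) with hNdef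
  set S := ∑ ω : Fin K → Equiv.Perm (Fin n),
      (avgF f (TempReg.Xtraj hn f α x0 k 0 ω) - avgF f xstar) with hS
  have hrw : 5 * ((i : ℕ) : ℝ) * α ^ 2 * G ^ 2 + 2 * ((i : ℕ) : ℝ) * α * (S / N)
      = (((i : ℕ) : ℝ) * (N * (5 * α ^ 2 * G ^ 2)) + 2 * ((i : ℕ) : ℝ) * α * S) / N := by
    field_simp
  show (∑ ω : Fin K → Equiv.Perm (Fin n),
      ‖TempReg.Xtraj hn f α x0 k (i : ℕ) ω - TempReg.Xtraj hn f α x0 k 0 ω‖ ^ 2) / N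
    ≤ 5 * ((i : ℕ) : ℝ) * α ^ 2 * G ^ 2 + 2 * ((i : ℕ) : ℝ) * α * (S / N)
  rw [hrw]
  gcongr
end
end

section
/- Suppose the constant step size satisfies α ≤ 2/L. Then for every epoch k and every 0 ≤ i ≤ n−1, E[d_{i,k}²] ≤ E[d_{0,k}²] + 5iα²G², where d_{i,k} = ‖x_i^k − x*‖. -/
open Finset MeasureTheory ProbabilityTheory RealInnerProductSpace

noncomputable section

section Aux

variable {E : Type*} [NormedAddCommGroup E] [InnerProductSpace ℝ E] [CompleteSpace E]

lemma my_hasDerivAt_line (f : E → ℝ) (x v : E) (t : ℝ) (gp : E)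
    (hg : HasGradientAt f gp (x + t • v)) :
    HasDerivAt (fun s : ℝ => f (x + s • v)) ⟪gp, v⟫ t := by
  have hc : HasDerivAt (fun s : ℝ => x + s • v) v t := by
    simpa using ((hasDerivAt_id t).smul_const v).const_add x
  have := hg.hasFDerivAt.comp_hasDerivAt t hc
  simp [InnerProductSpace.toDual_apply_apply] at this
  exact this

lemma my_gradIneq (f : E → ℝ) (hf : ConvexOn ℝ Set.univ f) (x : E) (gx : E)
    (hg : HasGradientAt f gx x) (y : E) :
    f x + ⟪gx, y - x⟫ ≤ f y := by
  set v := y - x with hv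
  have hline : HasDerivAt (fun s : ℝ => f (x + s • v)) ⟪gx, v⟫ 0 := by
    have := my_hasDerivAt_line f x v 0 gx (by simpa using hg)
    simpa using this
  have hconv : ConvexOn ℝ Set.univ (fun s : ℝ => f (x + s • v)) := by
    have h2 := hf.comp_affineMap (AffineMap.lineMap x y)
    have heq : (fun s : ℝ => f (x + s • v)) = f ∘ (AffineMap.lineMap x y) := by
      funext s
      simp only [Function.comp_apply, AffineMap.lineMap_apply_module]
      congr 1
      rw [hv]
      module
    rw [heq]
    simpa using h2
  have hs := hconv.le_slope_of_hasDerivAt (Set.mem_univ 0) (Set.mem_univ 1)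
    zero_lt_one hline
  rw [slope_def_field] at hs
  simp only [zero_smul, add_zero, one_smul] at hs
  have hxy : f (x + v) = f y := by rw [hv]; congr 1; abel
  rw [hxy] at hs
  have : ⟪gx, v⟫ ≤ f y - f x := by
    calc ⟪gx, v⟫ ≤ (f y - f x) / (1 - 0) := hs
    _ = f y - f x := by norm_num
  linarith

lemma my_descent (f : E → ℝ) (g : E → E) (L : ℝ) (hL : 0 < L)
    (hg : ∀ p, HasGradientAt f (g p) p)
    (hLip : ∀ a b, ‖g a - g b‖ ≤ L * ‖a - b‖) (x y : E) :
    f y ≤ f x + ⟪g x, y - x⟫ + L / 2 * ‖y - x‖ ^ 2 := by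
  set v := y - x with hv
  set h : ℝ → ℝ := fun t => (f x + t * ⟪g x, v⟫ + L / 2 * ‖v‖ ^ 2 * t ^ 2) - f (x + t • v)
    with hh
  have hd : ∀ t : ℝ, HasDerivAt h
      ((⟪g x, v⟫ + L / 2 * ‖v‖ ^ 2 * (2 * t)) - ⟪g (x + t • v), v⟫) t := by
    intro t
    have H1 : HasDerivAt (fun t : ℝ => f x + t * ⟪g x, v⟫) ⟪g x, v⟫ t := by
      simpa using (hasDerivAt_mul_const (c := ⟪g x, v⟫) (x := t)).const_add (f x)
    have H2 : HasDerivAt (fun t : ℝ => L / 2 * ‖v‖ ^ 2 * t ^ 2)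
        (L / 2 * ‖v‖ ^ 2 * (2 * t)) t := by
      have := (hasDerivAt_pow 2 t).const_mul (L / 2 * ‖v‖ ^ 2)
      simpa [mul_comm, mul_assoc] using this
    have H3 : HasDerivAt (fun s : ℝ => f (x + s • v)) ⟪g (x + t • v), v⟫ t :=
      my_hasDerivAt_line f x v t _ (hg _)
    exact (H1.add H2).sub H3
  have hmono : MonotoneOn h (Set.Icc (0:ℝ) 1) := by
    apply monotoneOn_of_deriv_nonneg (convex_Icc 0 1)
    · exact fun t _ => (hd t).differentiableAt.continuousAt.continuousWithinAt
    · exact fun t _ => (hd t).differentiableAt.differentiableWithinAt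
    · intro t ht
      rw [interior_Icc] at ht
      rw [(hd t).deriv]
      have h1 : ⟪g (x + t • v) - g x, v⟫ ≤ ‖g (x + t • v) - g x‖ * ‖v‖ :=
        real_inner_le_norm _ _
      have h2 : ‖g (x + t • v) - g x‖ ≤ L * (t * ‖v‖) := by
        have := hLip (x + t • v) x
        simpa [norm_smul, abs_of_nonneg ht.1.le] using this
      have h3 : ⟪g (x + t • v), v⟫ - ⟪g x, v⟫ ≤ L * t * ‖v‖ ^ 2 := by
      -- from h1, h2
        have h4 : ⟪g (x + t • v) - g x, v⟫ ≤ L * t * ‖v‖ ^ 2 := by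
          refine h1.trans ?_
          have hn : (0:ℝ) ≤ ‖v‖ := norm_nonneg v
          nlinarith
        rwa [inner_sub_left] at h4
      nlinarith
  have h01 := hmono (Set.mem_Icc.2 ⟨le_refl 0, zero_le_one⟩)
    (Set.mem_Icc.2 ⟨zero_le_one, le_refl 1⟩) zero_le_one
  have h0 : h 0 = 0 := by simp [hh]
  have h1 : h 1 = (f x + ⟪g x, v⟫ + L / 2 * ‖v‖ ^ 2) - f y := by
    simp only [hh, one_smul, one_pow, mul_one, one_mul]
    have : x + v = y := by rw [hv]; abel
    rw [this]
  rw [h0, h1] at h01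
  linarith

lemma my_grad_sub_linear (f : E → ℝ) (c p gp : E) (h : HasGradientAt f gp p) :
    HasGradientAt (fun z => f z - ⟪c, z⟫) (gp - c) p := by
  have h2 : HasFDerivAt (fun z : E => ⟪c, z⟫)
      ((InnerProductSpace.toDual ℝ E c) : E →L[ℝ] ℝ) p := by
    have h3 := (InnerProductSpace.toDual ℝ E c).hasFDerivAt (x := p)
    apply h3.congr_of_eventuallyEq
    filter_upwards with z
    simp [InnerProductSpace.toDual_apply_apply]
  have h4 := h.hasFDerivAt.sub h2
  rw [hasGradientAt_iff_hasFDerivAt]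
  rw [map_sub]
  exact h4

lemma my_convex_inner_aux (f : E → ℝ) (hf : ConvexOn ℝ Set.univ f) (c : E) :
    ConvexOn ℝ Set.univ (fun z => f z - ⟪c, z⟫) := by
  have h1 : ConvexOn ℝ Set.univ (fun z : E => ⟪-c, z⟫) := by
    refine ⟨convex_univ, ?_⟩
    intro x _ y _ a b _ _ _
    simp only [inner_add_right, real_inner_smul_right]
    exact le_of_eq rfl
  have h2 := hf.add h1
  have heq : (fun z => f z - ⟪c, z⟫) = f + fun z => ⟪-c, z⟫ := by
    funext z
    simp only [Pi.add_apply]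
    rw [inner_neg_left]
    ring
  rw [heq]
  exact h2

lemma my_cocoercive (f : E → ℝ) (hf : ConvexOn ℝ Set.univ f) (g : E → E) (L : ℝ) (hL : 0 < L)
    (hg : ∀ p, HasGradientAt f (g p) p)
    (hLip : ∀ a b, ‖g a - g b‖ ≤ L * ‖a - b‖) (a b : E) :
    ‖g a - g b‖ ^ 2 ≤ L * ⟪g a - g b, a - b⟫ := by
  have key : ∀ x y : E, f x - ⟪g x, x⟫ ≤ (f y - ⟪g x, y⟫) - 1 / (2 * L) * ‖g y - g x‖ ^ 2 := by
    intro x y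
    set φ : E → ℝ := fun z => f z - ⟪g x, z⟫ with hφ
    have hgrad : ∀ p, HasGradientAt φ (g p - g x) p :=
      fun p => my_grad_sub_linear f (g x) p (g p) (hg p)
    have hφconv : ConvexOn ℝ Set.univ φ := my_convex_inner_aux f hf (g x)
    have hφLip : ∀ u w : E, ‖(g u - g x) - (g w - g x)‖ ≤ L * ‖u - w‖ := by
      intro u w; simpa using hLip u w
    set w : E := y - (1/L) • (g y - g x) with hw
    have hmin : φ x ≤ φ w := by
      have := my_gradIneq φ hφconv x (g x - g x) (by simpa using hgrad x) w
      simpa using this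
    have hdesc : φ w ≤ φ y + ⟪g y - g x, w - y⟫ + L / 2 * ‖w - y‖ ^ 2 :=
      my_descent φ (fun p => g p - g x) L hL hgrad hφLip y w
    have hwy : w - y = -((1/L) • (g y - g x)) := by rw [hw]; abel
    have hinner : ⟪g y - g x, w - y⟫ = -(1/L) * ‖g y - g x‖ ^ 2 := by
      rw [hwy, inner_neg_right, real_inner_smul_right, real_inner_self_eq_norm_sq]
      ring
    have hnorm : ‖w - y‖ ^ 2 = (1/L)^2 * ‖g y - g x‖ ^ 2 := by
      rw [hwy, norm_neg, norm_smul, mul_pow, Real.norm_eq_abs, sq_abs]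
    have : φ x ≤ φ y - 1 / (2*L) * ‖g y - g x‖ ^ 2 := by
      rw [hinner, hnorm] at hdesc
      have hexp : -(1/L) * ‖g y - g x‖ ^ 2 + L / 2 * ((1/L)^2 * ‖g y - g x‖ ^ 2)
          = -(1 / (2*L)) * ‖g y - g x‖ ^ 2 := by
        field_simp
        ring
      calc φ x ≤ φ w := hmin
      _ ≤ φ y + (-(1/L) * ‖g y - g x‖ ^ 2 + L / 2 * ((1/L)^2 * ‖g y - g x‖ ^ 2)) := by
          linarith
      _ = φ y - 1 / (2*L) * ‖g y - g x‖ ^ 2 := by rw [hexp]; ring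
    simpa [hφ] using this
  have k1 := key a b
  have k2 := key b a
  have hrev : ‖g b - g a‖ = ‖g a - g b‖ := norm_sub_rev _ _
  rw [hrev] at k1
  have hsum : (1/L) * ‖g a - g b‖ ^ 2 ≤ ⟪g a - g b, a - b⟫ := by
    have e1 : ⟪g a - g b, a - b⟫
        = ⟪g a, a⟫ - ⟪g a, b⟫ - ⟪g b, a⟫ + ⟪g b, b⟫ := by
      simp only [inner_sub_left, inner_sub_right]
      ring
    rw [e1]
    have h2L : (0:ℝ) < 2 * L := by linarith
    have : 1/L = 1/(2*L) + 1/(2*L) := by field_simp; ring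
    rw [this]
    linarith
  calc ‖g a - g b‖ ^ 2 = L * ((1/L) * ‖g a - g b‖ ^ 2) := by field_simp
  _ ≤ L * ⟪g a - g b, a - b⟫ := by
      exact mul_le_mul_of_nonneg_left hsum hL.le

lemma my_nonexpansive (f : E → ℝ) (hf : ConvexOn ℝ Set.univ f) (g : E → E) (L α : ℝ)
    (hL : 0 < L) (hα : 0 ≤ α) (hα2 : α ≤ 2 / L)
    (hg : ∀ p, HasGradientAt f (g p) p)
    (hLip : ∀ a b, ‖g a - g b‖ ≤ L * ‖a - b‖) (a b : E) :
    ‖(a - α • g a) - (b - α • g b)‖ ≤ ‖a - b‖ := by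
  have hco := my_cocoercive f hf g L hL hg hLip a b
  have hrearr : (a - α • g a) - (b - α • g b) = (a - b) - α • (g a - g b) := by
    rw [smul_sub]; abel
  have hαL : α * L ≤ 2 := (le_div_iff₀ hL).mp hα2
  have hI : 0 ≤ ⟪g a - g b, a - b⟫ := by
    nlinarith [sq_nonneg ‖g a - g b‖]
  have hsq : ‖(a - b) - α • (g a - g b)‖ ^ 2 ≤ ‖a - b‖ ^ 2 := by
    rw [norm_sub_sq_real]
    have h1 : ⟪a - b, α • (g a - g b)⟫ = α * ⟪g a - g b, a - b⟫ := by
      rw [real_inner_smul_right, real_inner_comm]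
    have h2 : ‖α • (g a - g b)‖ ^ 2 = α^2 * ‖g a - g b‖^2 := by
      rw [norm_smul, mul_pow, Real.norm_eq_abs, sq_abs]
    rw [h1, h2]
    nlinarith [mul_nonneg hα hI, sq_nonneg α, mul_le_mul_of_nonneg_left hco (sq_nonneg α)]
  rw [hrearr]
  have := Real.sqrt_le_sqrt hsq
  rwa [Real.sqrt_sq (norm_nonneg _), Real.sqrt_sq (norm_nonneg _)] at this

end Aux

lemma sgdoSeq_congr {d n : ℕ} (hn : 0 < n) (f : Fin n → Vec d → ℝ) (α : ℝ)
    (x0 : Vec d) (σ σ' : ℕ → Equiv.Perm (Fin n)) (t : ℕ)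
    (h : ∀ s, s < t → σ (s / n) ⟨s % n, Nat.mod_lt s hn⟩ = σ' (s / n) ⟨s % n, Nat.mod_lt s hn⟩) :
    sgdoSeq hn f α x0 σ t = sgdoSeq hn f α x0 σ' t := by
  induction t with
  | zero => rfl
  | succ t ih =>
    have h1 := ih (fun s hs => h s (hs.trans (Nat.lt_succ_self t)))
    have h2 := h t (Nat.lt_succ_self t)
    simp only [sgdoSeq]
    rw [h1, h2]

lemma sgdo_step {d n : ℕ} (hn : 0 < n) (f : Fin n → Vec d → ℝ) (α : ℝ)
    (x0 : Vec d) (σ : ℕ → Equiv.Perm (Fin n)) (k j : ℕ) (hj : j < n) :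
    sgdoSeq hn f α x0 σ ((k-1)*n + j + 1)
      = sgdoSeq hn f α x0 σ ((k-1)*n + j)
        - α • gradient (f (σ (k-1) ⟨j, hj⟩)) (sgdoSeq hn f α x0 σ ((k-1)*n + j)) := by
  have hdiv : ((k-1)*n + j) / n = k - 1 := by
    rw [add_comm, Nat.add_mul_div_right _ _ hn, Nat.div_eq_of_lt hj, zero_add]
  have hmod : ((k-1)*n + j) % n = j := by
    rw [add_comm, Nat.add_mul_mod_self_right, Nat.mod_eq_of_lt hj]
  have hfin : (⟨((k-1)*n + j) % n, Nat.mod_lt _ hn⟩ : Fin n) = ⟨j, hj⟩ := by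
    ext; exact hmod
  conv_lhs => rw [sgdoSeq]
  rw [hdiv, hfin]


set_option maxHeartbeats 1000000

/-- **Lemma 6 (temporal regularity, second part).** If `α ≤ 2/L`, then
`E[d_(i,k)²] ≤ E[d_(0,k)²] + 5iα²G²`. -/
theorem temporal_regularity_distance
    (d n K : ℕ) (hn : 0 < n) (hK : 0 < K)
    (f : Fin n → Vec d → ℝ) (G L α : ℝ) (x0 xstar : Vec d)
    (hα : 0 < α) (hα2 : α ≤ 2 / L)
    (hdiff : ∀ i, Differentiable ℝ (f i))
    (hconv : ∀ i, ConvexOn ℝ Set.univ (f i))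
    (hGlip : ∀ i x, ‖gradient (f i) x‖ ≤ G)
    (hLsmooth : ∀ i x y, ‖gradient (f i) x - gradient (f i) y‖ ≤ L * ‖x - y‖)
    (hmin : ∀ y, avgF f xstar ≤ avgF f y)
    (k : ℕ) (hk1 : 1 ≤ k) (hkK : k ≤ K) (i : Fin n) :
    unifExp (fun ω : Fin K → Equiv.Perm (Fin n) => ‖sgdoIter hn f α x0 (extendPerm ω) k (i : ℕ) - xstar‖ ^ 2)
      ≤ unifExp (fun ω : Fin K → Equiv.Perm (Fin n) => ‖sgdoIter hn f α x0 (extendPerm ω) k 0 - xstar‖ ^ 2)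
        + 5 * (i : ℕ) * α ^ 2 * G ^ 2 := by
  classical
  -- basic scalar facts
  have hL : 0 < L := by
    rcases lt_trichotomy L 0 with h | h | h
    · have : 2 / L < 0 := div_neg_of_pos_of_neg two_pos h
      linarith
    · rw [h, div_zero] at hα2; linarith
    · exact h
  have hG0 : 0 ≤ G := le_trans (norm_nonneg _) (hGlip ⟨0, hn⟩ x0)
  have hκlt : k - 1 < K := by omega
  set κ : Fin K := ⟨k - 1, hκlt⟩ with hκ
  set Ω := (Fin K → Equiv.Perm (Fin n)) with hΩ
  set X : Ω → ℕ → Vec d :=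
    fun ω j => sgdoSeq hn f α x0 (extendPerm ω) ((k-1)*n + j) with hX
  set NR : ℝ := (Fintype.card Ω : ℝ) with hNR
  have hNpos : 0 < NR := by
    rw [hNR]
    exact_mod_cast Fintype.card_pos
  -- gradient facts
  have hgrad : ∀ (c : Fin n) (p : Vec d), HasGradientAt (f c) (gradient (f c) p) p :=
    fun c p => ((hdiff c) p).hasGradientAt
  have hGI : ∀ (c : Fin n) (a b : Vec d), f c a + ⟪gradient (f c) a, b - a⟫ ≤ f c b :=
    fun c a b => my_gradIneq (f c) (hconv c) a _ (hgrad c a) b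
  have hlipf : ∀ (c : Fin n) (a b : Vec d), f c a - G * ‖b - a‖ ≤ f c b := by
    intro c a b
    have h1 := hGI c a b
    have h2 : |⟪gradient (f c) a, b - a⟫| ≤ ‖gradient (f c) a‖ * ‖b - a‖ :=
      abs_real_inner_le_norm _ _
    have h3 : ‖gradient (f c) a‖ * ‖b - a‖ ≤ G * ‖b - a‖ :=
      mul_le_mul_of_nonneg_right (hGlip c a) (norm_nonneg _)
    have h4 : -(G * ‖b - a‖) ≤ ⟪gradient (f c) a, b - a⟫ := by
      have := neg_abs_le ⟪gradient (f c) a, b - a⟫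
      linarith
    linarith
  have hnonexp : ∀ (c : Fin n) (a b : Vec d),
      ‖(a - α • gradient (f c) a) - (b - α • gradient (f c) b)‖ ≤ ‖a - b‖ :=
    fun c a b => my_nonexpansive (f c) (hconv c) _ L α hL hα.le hα2 (hgrad c) (hLsmooth c) a b
  have hFmin : ∀ z : Vec d, ∑ c, f c xstar ≤ ∑ c, f c z := by
    intro z
    have h1 := hmin z
    unfold avgF at h1
    have hnR : (0:ℝ) < (n:ℝ) := by exact_mod_cast hn
    exact (div_le_div_iff_of_pos_right hnR).mp h1
  -- step formula
  have hstep : ∀ (ω : Ω) (j : ℕ) (hj : j < n),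
      X ω (j+1) = X ω j - α • gradient (f (ω κ ⟨j, hj⟩)) (X ω j) := by
    intro ω j hj
    have h1 : (k-1)*n + (j+1) = ((k-1)*n + j) + 1 := rfl
    have h2 := sgdo_step hn f α x0 (extendPerm ω) k j hj
    have h3 : extendPerm ω (k-1) = ω κ := by
      rw [extendPerm, dif_pos hκlt]
    rw [hX]
    simp only [h1]
    rw [h2, h3]
  -- congruence: ω, ω' agreeing off κ and on positions < j at κ give same X at j ≤ n
  have hcong : ∀ (ω ω' : Ω) (j : ℕ), j ≤ n →
      (∀ i : Fin K, i ≠ κ → ω i = ω' i) →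
      (∀ m : Fin n, (m : ℕ) < j → ω κ m = ω' κ m) →
      X ω j = X ω' j := by
    intro ω ω' j hjn hoff hpos
    induction j with
    | zero =>
      rw [hX]
      simp only [Nat.add_zero]
      apply sgdoSeq_congr
      intro s hs
      have hsdiv : s / n < k - 1 := by
        rw [Nat.div_lt_iff_lt_mul hn]
        omega
      have hsK : s / n < K := by omega
      rw [extendPerm, extendPerm, dif_pos hsK, dif_pos hsK]
      have : (⟨s / n, hsK⟩ : Fin K) ≠ κ := by
        rw [hκ]
        intro hcon
        have := Fin.mk.injEq (s/n) hsK (k-1) hκlt ▸ hcon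
        simp only [Fin.mk.injEq] at hcon
        omega
      rw [hoff _ this]
    | succ j ih =>
      have hjn' : j < n := by omega
      have h1 := hstep ω j hjn'
      have h2 := hstep ω' j hjn'
      rw [h1, h2, ih (by omega) (fun m hm => hpos m (by omega)),
        hpos ⟨j, hjn'⟩ (by simp)]
  -- swap bijection sum identity
  have hesum : ∀ (π : Equiv.Perm (Fin n)) (h : Ω → ℝ),
      ∑ ω : Ω, h (Function.update ω κ (ω κ * π)) = ∑ ω : Ω, h ω := by
    intro π h
    exact Equiv.sum_comp
      ⟨fun ω => Function.update ω κ (ω κ * π),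
       fun ω => Function.update ω κ (ω κ * π⁻¹),
       fun ω => by
         funext i
         by_cases hi : i = κ
         · subst hi; simp [Function.update_self, mul_assoc]
         · simp [Function.update_of_ne hi],
       fun ω => by
         funext i
         by_cases hi : i = κ
         · subst hi; simp [Function.update_self, mul_assoc]
         · simp [Function.update_of_ne hi]⟩ h
  -- close lemma: swapping a seen slot with an unseen slot moves X by ≤ 2αG
  have hclose : ∀ (ω : Ω) (j : ℕ), j < n → ∀ (a b : Fin n), (a:ℕ) < j → j ≤ (b:ℕ) →
      ‖X (Function.update ω κ (ω κ * Equiv.swap a b)) j - X ω j‖ ≤ 2*α*G := by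
    intro ω j hj a b ha hb
    set ω' : Ω := Function.update ω κ (ω κ * Equiv.swap a b) with hω'
    have hωκ' : ω' κ = ω κ * Equiv.swap a b := Function.update_self _ _ _
    have hoff : ∀ i : Fin K, i ≠ κ → ω' i = ω i := fun i hi => Function.update_of_ne hi _ _
    have main : ∀ l, l ≤ j →
        ((l ≤ (a:ℕ) → X ω' l = X ω l) ∧ ((a:ℕ) < l → ‖X ω' l - X ω l‖ ≤ 2*α*G)) := by
      intro l
      induction l with
      | zero =>
        intro _
        refine ⟨fun _ => ?_, fun h => absurd h (by omega)⟩
        exact hcong ω' ω 0 (by omega) hoff (fun m hm => absurd hm (by omega))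
      | succ l ih =>
        intro hl
        have hln : l < n := by omega
        have h1 := hstep ω' l hln
        have h2 := hstep ω l hln
        have hfb : (⟨l, hln⟩ : Fin n) ≠ b := Fin.ne_of_val_ne (by simp only [Fin.val_mk]; omega)
        rcases lt_trichotomy l (a:ℕ) with hc | hc | hc
        · refine ⟨fun _ => ?_, fun hcon => absurd hcon (by omega)⟩
          have hfa : (⟨l, hln⟩ : Fin n) ≠ a := Fin.ne_of_val_ne (by simp only [Fin.val_mk]; omega)
          have heq := (ih (by omega)).1 (by omega)
          rw [h1, h2, heq, hωκ', Equiv.Perm.mul_apply,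
            Equiv.swap_apply_of_ne_of_ne hfa hfb]
        · refine ⟨fun hcon => absurd hcon (by omega), fun _ => ?_⟩
          have heq := (ih (by omega)).1 (by omega)
          have hfa : (⟨l, hln⟩ : Fin n) = a := Fin.ext hc
          rw [h1, h2, heq, hωκ', Equiv.Perm.mul_apply, hfa, Equiv.swap_apply_left]
          have hre : (X ω l - α • gradient (f (ω κ b)) (X ω l))
              - (X ω l - α • gradient (f (ω κ a)) (X ω l))
              = α • (gradient (f (ω κ a)) (X ω l) - gradient (f (ω κ b)) (X ω l)) := by
            rw [smul_sub]; abel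
          rw [hre, norm_smul, Real.norm_eq_abs, abs_of_nonneg hα.le]
          have ht := norm_sub_le (gradient (f (ω κ a)) (X ω l)) (gradient (f (ω κ b)) (X ω l))
          have g1 := hGlip (ω κ a) (X ω l)
          have g2 := hGlip (ω κ b) (X ω l)
          calc α * ‖gradient (f (ω κ a)) (X ω l) - gradient (f (ω κ b)) (X ω l)‖
              ≤ α * (2*G) := mul_le_mul_of_nonneg_left (by linarith) hα.le
          _ = 2*α*G := by ring
        · refine ⟨fun hcon => absurd hcon (by omega), fun _ => ?_⟩
          have hprev := (ih (by omega)).2 hc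
          have hfa : (⟨l, hln⟩ : Fin n) ≠ a := Fin.ne_of_val_ne (by simp only [Fin.val_mk]; omega)
          rw [h1, h2, hωκ', Equiv.Perm.mul_apply,
            Equiv.swap_apply_of_ne_of_ne hfa hfb]
          exact le_trans (hnonexp (ω κ ⟨l, hln⟩) (X ω' l) (X ω l)) hprev
    exact (main j le_rfl).2 ha
  -- expectation lemma
  have hexp : ∀ (j : ℕ) (hj : j < n),
      (∑ ω : Ω, f (ω κ ⟨j, hj⟩) xstar) - 2*α*G^2*NR ≤ ∑ ω : Ω, f (ω κ ⟨j, hj⟩) (X ω j) := by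
    intro j hj
    set jF : Fin n := ⟨j, hj⟩ with hjF
    set A : ℝ := ∑ ω : Ω, f (ω κ jF) (X ω j) with hA
    set B : ℝ := ∑ ω : Ω, f (ω κ jF) xstar with hB
    have hi : ∀ l : Fin n, ∑ ω : Ω, f (ω κ l) xstar = B := by
      intro l
      by_cases hlj : l = jF
      · rw [hlj]
      · show ∑ ω : Ω, f (ω κ l) xstar = ∑ ω : Ω, f (ω κ jF) xstar
        rw [← hesum (Equiv.swap l jF) (fun ω => f (ω κ jF) xstar)]
        apply Finset.sum_congr rfl
        intro ω _
        have hidx : (Function.update ω κ (ω κ * Equiv.swap l jF)) κ jF = ω κ l := by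
          rw [Function.update_self, Equiv.Perm.mul_apply, Equiv.swap_apply_right]
        rw [hidx]
    have hii : ∀ l : Fin n, j ≤ (l:ℕ) → ∑ ω : Ω, f (ω κ l) (X ω j) = A := by
      intro l hl
      by_cases hlj : l = jF
      · rw [hlj]
      · show ∑ ω : Ω, f (ω κ l) (X ω j) = ∑ ω : Ω, f (ω κ jF) (X ω j)
        rw [← hesum (Equiv.swap l jF) (fun ω => f (ω κ jF) (X ω j))]
        apply Finset.sum_congr rfl
        intro ω _
        have hXeq : X (Function.update ω κ (ω κ * Equiv.swap l jF)) j = X ω j := by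
          apply hcong _ _ j (le_of_lt hj)
            (fun i hi => Function.update_of_ne hi _ _)
          intro m hm
          rw [Function.update_self, Equiv.Perm.mul_apply,
            Equiv.swap_apply_of_ne_of_ne (Fin.ne_of_val_ne (by omega))
              (Fin.ne_of_val_ne (by simp [hjF]; omega))]
        rw [hXeq]
        have hidx : (Function.update ω κ (ω κ * Equiv.swap l jF)) κ jF = ω κ l := by
          rw [Function.update_self, Equiv.Perm.mul_apply, Equiv.swap_apply_right]
        rw [hidx]
    have hiii : ∀ l : Fin n, (l:ℕ) < j →
        ∑ ω : Ω, f (ω κ l) (X ω j) ≤ A + 2*α*G^2*NR := by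
      intro l hl
      have hA2 : A = ∑ ω : Ω,
          f (ω κ l) (X (Function.update ω κ (ω κ * Equiv.swap l jF)) j) := by
        rw [hA, ← hesum (Equiv.swap l jF) (fun ω => f (ω κ jF) (X ω j))]
        apply Finset.sum_congr rfl
        intro ω _
        have hidx : (Function.update ω κ (ω κ * Equiv.swap l jF)) κ jF = ω κ l := by
          rw [Function.update_self, Equiv.Perm.mul_apply, Equiv.swap_apply_right]
        rw [hidx]
      have hpt : ∀ ω : Ω, f (ω κ l) (X ω j)
          ≤ f (ω κ l) (X (Function.update ω κ (ω κ * Equiv.swap l jF)) j) + 2*α*G^2 := by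
        intro ω
        have hcl := hclose ω j hj l jF hl (by simp [hjF])
        have hlip := hlipf (ω κ l) (X ω j)
          (X (Function.update ω κ (ω κ * Equiv.swap l jF)) j)
        have hm : G * ‖X (Function.update ω κ (ω κ * Equiv.swap l jF)) j - X ω j‖
            ≤ G * (2*α*G) := mul_le_mul_of_nonneg_left hcl hG0
        nlinarith
      calc ∑ ω : Ω, f (ω κ l) (X ω j)
          ≤ ∑ ω : Ω, (f (ω κ l) (X (Function.update ω κ (ω κ * Equiv.swap l jF)) j)
              + 2*α*G^2) := Finset.sum_le_sum (fun ω _ => hpt ω)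
      _ = (∑ ω : Ω, f (ω κ l) (X (Function.update ω κ (ω κ * Equiv.swap l jF)) j))
            + NR * (2*α*G^2) := by
          rw [Finset.sum_add_distrib, Finset.sum_const, Finset.card_univ, nsmul_eq_mul, hNR]
      _ = A + 2*α*G^2*NR := by rw [← hA2]; ring
    have hsum1 : ∑ l : Fin n, ∑ ω : Ω, f (ω κ l) (X ω j)
        = ∑ ω : Ω, ∑ c : Fin n, f c (X ω j) := by
      rw [Finset.sum_comm]
      exact Finset.sum_congr rfl (fun ω _ => Equiv.sum_comp (ω κ) (fun c => f c (X ω j)))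
    have hsum2 : ∑ l : Fin n, ∑ ω : Ω, f (ω κ l) xstar
        = ∑ ω : Ω, ∑ c : Fin n, f c xstar := by
      rw [Finset.sum_comm]
      exact Finset.sum_congr rfl (fun ω _ => Equiv.sum_comp (ω κ) (fun c => f c xstar))
    have hnB : (n:ℝ) * B = ∑ ω : Ω, ∑ c : Fin n, f c xstar := by
      rw [← hsum2]
      rw [Finset.sum_congr rfl (fun l _ => hi l), Finset.sum_const, Finset.card_univ,
        Fintype.card_fin, nsmul_eq_mul]
    have hlower : (n:ℝ) * B ≤ ∑ l : Fin n, ∑ ω : Ω, f (ω κ l) (X ω j) := by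
      rw [hnB, hsum1]
      exact Finset.sum_le_sum (fun ω _ => hFmin (X ω j))
    have hnonneg : (0:ℝ) ≤ 2*α*G^2*NR := by positivity
    have hupper : ∑ l : Fin n, ∑ ω : Ω, f (ω κ l) (X ω j)
        ≤ (n:ℝ) * (A + 2*α*G^2*NR) := by
      calc ∑ l : Fin n, ∑ ω : Ω, f (ω κ l) (X ω j)
          ≤ ∑ _l : Fin n, (A + 2*α*G^2*NR) := by
            apply Finset.sum_le_sum
            intro l _
            rcases lt_or_ge (l:ℕ) j with hcase | hcase
            · exact hiii l hcase
            · rw [hii l hcase]; linarith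
      _ = (n:ℝ) * (A + 2*α*G^2*NR) := by
          rw [Finset.sum_const, Finset.card_univ, Fintype.card_fin, nsmul_eq_mul]
    have hnpos : (0:ℝ) < (n:ℝ) := by exact_mod_cast hn
    have hfinal : (n:ℝ) * B ≤ (n:ℝ) * (A + 2*α*G^2*NR) := le_trans hlower hupper
    have := (mul_le_mul_iff_right₀ hnpos).mp hfinal
    linarith
  -- one-step expected inequality
  have hstepE : ∀ (j : ℕ), j < n →
      ∑ ω : Ω, ‖X ω (j+1) - xstar‖^2
        ≤ (∑ ω : Ω, ‖X ω j - xstar‖^2) + 5*α^2*G^2*NR := by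
    intro j hj
    have hpt : ∀ ω : Ω, ‖X ω (j+1) - xstar‖^2
        ≤ ‖X ω j - xstar‖^2
          - 2*α*(f (ω κ ⟨j, hj⟩) (X ω j) - f (ω κ ⟨j, hj⟩) xstar) + α^2*G^2 := by
      intro ω
      have h1 : X ω (j+1) - xstar
          = (X ω j - xstar) - α • gradient (f (ω κ ⟨j, hj⟩)) (X ω j) := by
        rw [hstep ω j hj]; abel
      rw [h1, norm_sub_sq_real]
      have h2 : ⟪X ω j - xstar, α • gradient (f (ω κ ⟨j, hj⟩)) (X ω j)⟫
          = α * ⟪gradient (f (ω κ ⟨j, hj⟩)) (X ω j), X ω j - xstar⟫ := by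
        rw [real_inner_smul_right, real_inner_comm]
      have h3 : ‖α • gradient (f (ω κ ⟨j, hj⟩)) (X ω j)‖^2
          = α^2 * ‖gradient (f (ω κ ⟨j, hj⟩)) (X ω j)‖^2 := by
        rw [norm_smul, mul_pow, Real.norm_eq_abs, sq_abs]
      rw [h2, h3]
      set y2 : ℝ := ‖X ω j - xstar‖^2 with hy2
      set ip : ℝ := ⟪gradient (f (ω κ ⟨j, hj⟩)) (X ω j), X ω j - xstar⟫ with hip
      set gn : ℝ := ‖gradient (f (ω κ ⟨j, hj⟩)) (X ω j)‖^2 with hgn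
      set fX : ℝ := f (ω κ ⟨j, hj⟩) (X ω j) with hfX
      set fS : ℝ := f (ω κ ⟨j, hj⟩) xstar with hfS
      have h4 : fX - fS ≤ ip := by
        have h5 := hGI (ω κ ⟨j, hj⟩) (X ω j) xstar
        have h6 : ⟪gradient (f (ω κ ⟨j, hj⟩)) (X ω j), xstar - X ω j⟫
            = -⟪gradient (f (ω κ ⟨j, hj⟩)) (X ω j), X ω j - xstar⟫ := by
          rw [← inner_neg_right]
          congr 1
          abel
        rw [h6] at h5
        linarith
      have h7 : gn ≤ G^2 := by
        have h8 := hGlip (ω κ ⟨j, hj⟩) (X ω j)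
        have h9 := norm_nonneg (gradient (f (ω κ ⟨j, hj⟩)) (X ω j))
        rw [hgn]
        nlinarith
      have m1 : 2*α*(fX - fS) ≤ 2*α*ip :=
        mul_le_mul_of_nonneg_left h4 (by linarith : (0:ℝ) ≤ 2*α)
      have m2 : α^2*gn ≤ α^2*G^2 := mul_le_mul_of_nonneg_left h7 (sq_nonneg α)
      linarith
    have hAB := hexp j hj
    calc ∑ ω : Ω, ‖X ω (j+1) - xstar‖^2
        ≤ ∑ ω : Ω, (‖X ω j - xstar‖^2
            - 2*α*(f (ω κ ⟨j, hj⟩) (X ω j) - f (ω κ ⟨j, hj⟩) xstar) + α^2*G^2) :=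
          Finset.sum_le_sum (fun ω _ => hpt ω)
    _ = (∑ ω : Ω, ‖X ω j - xstar‖^2)
          - 2*α*((∑ ω : Ω, f (ω κ ⟨j, hj⟩) (X ω j)) - ∑ ω : Ω, f (ω κ ⟨j, hj⟩) xstar)
          + α^2*G^2*NR := by
        rw [Finset.sum_add_distrib, Finset.sum_sub_distrib, Finset.sum_const,
          Finset.card_univ, nsmul_eq_mul, ← Finset.mul_sum, Finset.sum_sub_distrib, hNR]
        ring
    _ ≤ (∑ ω : Ω, ‖X ω j - xstar‖^2) + 5*α^2*G^2*NR := by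
        have hm : -((∑ ω : Ω, f (ω κ ⟨j, hj⟩) (X ω j))
            - ∑ ω : Ω, f (ω κ ⟨j, hj⟩) xstar) ≤ 2*α*G^2*NR := by linarith
        have := mul_le_mul_of_nonneg_left hm (by linarith : (0:ℝ) ≤ 2*α)
        nlinarith [sq_nonneg α, sq_nonneg G, hNpos.le, hα.le, hG0]
  -- induction over steps within the epoch
  have hind : ∀ j : ℕ, j < n →
      ∑ ω : Ω, ‖X ω j - xstar‖^2
        ≤ (∑ ω : Ω, ‖X ω 0 - xstar‖^2) + 5*(j:ℝ)*α^2*G^2*NR := by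
    intro j
    induction j with
    | zero => intro _; simp
    | succ j ih =>
      intro hj
      have h1 := hstepE j (by omega)
      have h2 := ih (by omega)
      have hcast : ((j+1 : ℕ) : ℝ) = (j:ℝ) + 1 := by push_cast; ring
      rw [hcast]
      linarith
  -- final arithmetic
  have hfin := hind (i : ℕ) i.isLt
  have hgoal1 : (fun ω : Ω => ‖sgdoIter hn f α x0 (extendPerm ω) k (i : ℕ) - xstar‖ ^ 2)
      = fun ω : Ω => ‖X ω (i : ℕ) - xstar‖^2 := rfl
  have hgoal2 : (fun ω : Ω => ‖sgdoIter hn f α x0 (extendPerm ω) k 0 - xstar‖ ^ 2)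
      = fun ω : Ω => ‖X ω 0 - xstar‖^2 := rfl
  rw [hgoal1, hgoal2]
  unfold unifExp
  have hdiv := (div_le_div_iff_of_pos_right hNpos).mpr hfin
  rw [add_div, mul_div_assoc, div_self (ne_of_gt hNpos), mul_one] at hdiv
  exact hdiv

end
end
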